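/- arXiv:2503.12784 — 2 statements merged into one kernel-verified Lean document; each statement's English description precedes it below -/
import Mathlib

section
/- Let X be a finite set of covariate values, Y a finite outcome set, D ∈ {0,1} a treatment, and define the equivalence relation x₁ ∼ x₂ iff P(Y=y | X=x₁) = P(Y=y | X=x₂) for all y. Let M(x) denote the equivalence class of x. If Y ⊥ D | X (conditional independence of Y and D given X), then Y ⊥ X | M and Y ⊥ D | M. -/
/-!
On an observational class all strata `X = x'` share the outcome law of `X = x`, and by
`Y ⊥ D ∣ X` so do the strata `D = d, X = x'`. A conditional probability given a union of
strata is the mass-weighted average of the strata's, so pooling strata with a common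
conditional law leaves it unchanged. The strata have positive mass because
`P(X = x') = ∑ d, P(D = d, X = x')`.
-/

open Finset
open scoped Classical BigOperators

section

variable {Ω α β R K : Type*} [Fintype Ω]

theorem sum_div_sum_eq_of_forall_eq_mul {ι : Type*} [Field K] {s : Finset ι} {f g : ι → K}
    {c : K} (h : ∀ i ∈ s, f i = c * g i) (hg : ∑ i ∈ s, g i ≠ 0) :
    (∑ i ∈ s, f i) / ∑ i ∈ s, g i = c := by
  rw [sum_congr rfl h, ← mul_sum, mul_div_assoc, div_self hg, mul_one]

def mass [AddCommMonoid R] (p : Ω → R) (A : Ω → Prop) [DecidablePred A] : R :=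
  ∑ ω ∈ univ.filter A, p ω

/-- `P(Y = y ∣ A)`, which is `0` when `A` has mass zero. -/
noncomputable def condProb [Field K] (p : Ω → K) (Y : Ω → β) (A : Ω → Prop) (y : β) : K :=
  (∑ ω ∈ univ.filter (fun ω => Y ω = y ∧ A ω), p ω) / ∑ ω ∈ univ.filter A, p ω

theorem mass_congr [AddCommMonoid R] (p : Ω → R) {A B : Ω → Prop} [DecidablePred A]
    [DecidablePred B] (h : ∀ ω, A ω ↔ B ω) : mass p A = mass p B := by
  rw [mass, mass, filter_congr fun ω _ => h ω]

theorem condProb_eq_mass_div_mass [Field K] (p : Ω → K) (Y : Ω → β) (A : Ω → Prop)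
    [DecidablePred A] (y : β) :
    condProb p Y A y = mass p (fun ω => Y ω = y ∧ A ω) / mass p A := by
  rw [condProb, mass, mass]
  congr

theorem mass_eq_sum_mass_and_eq [AddCommMonoid R] [DecidableEq α] (p : Ω → R) (A : Ω → Prop)
    [DecidablePred A] (X : Ω → α) {t : Finset α} (h : ∀ ω, A ω → X ω ∈ t) :
    mass p A = ∑ x ∈ t, mass p (fun ω => A ω ∧ X ω = x) := by
  rw [mass, ← sum_fiberwise_of_maps_to (g := X) fun ω hω => h ω (mem_filter.1 hω).2]
  simp only [mass, filter_filter]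

theorem condProb_and_mem_eq_of_forall_mem [Field K] [LinearOrder K] [IsStrictOrderedRing K]
    [Fintype α] [DecidableEq α] (p : Ω → K) (Y : Ω → β) (A : Ω → Prop) [DecidablePred A]
    (X : Ω → α) (S : Set α) [DecidablePred (· ∈ S)] {y : β} {c : K}
    (hc : ∀ x ∈ S, condProb p Y (fun ω => A ω ∧ X ω = x) y = c)
    (hpos : ∀ x ∈ S, 0 < mass p (fun ω => A ω ∧ X ω = x)) (hS : S.Nonempty) :
    condProb p Y (fun ω => A ω ∧ X ω ∈ S) y = c := by
  have hfiber (B : Ω → Prop) [DecidablePred B] (hB : ∀ ω, B ω → X ω ∈ S) :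
      mass p B = ∑ x ∈ univ.filter (· ∈ S), mass p (fun ω => B ω ∧ X ω = x) :=
    mass_eq_sum_mass_and_eq p B X fun ω hω => by simpa using hB ω hω
  have hfiber_eq {x : α} (hx : x ∈ univ.filter (· ∈ S)) (ω : Ω) :
      (A ω ∧ X ω ∈ S) ∧ X ω = x ↔ A ω ∧ X ω = x :=
    ⟨fun h => ⟨h.1.1, h.2⟩, fun h => ⟨⟨h.1, h.2 ▸ by simpa using hx⟩, h.2⟩⟩
  rw [condProb_eq_mass_div_mass, hfiber _ fun ω h => h.2.2, hfiber _ fun ω h => h.2]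
  refine sum_div_sum_eq_of_forall_eq_mul (fun x hx => ?_) (sum_pos (fun x hx => ?_) ?_).ne'
  · rw [mass_congr p (hfiber_eq hx),
      mass_congr p fun ω => and_assoc.trans (and_congr_right' (hfiber_eq hx ω))]
    have hxS : x ∈ S := by simpa using hx
    rw [← hc x hxS, condProb_eq_mass_div_mass, div_mul_cancel₀ _ (hpos x hxS).ne']
  · rw [mass_congr p (hfiber_eq hx)]
    exact hpos x (by simpa using hx)
  · obtain ⟨x₀, hx₀⟩ := hS
    exact ⟨x₀, by simpa using hx₀⟩

end

theorem observational_partition_preserves_unconfoundedness_general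
    {Ω 𝒳 𝒴 : Type*} [Fintype Ω] [Fintype 𝒳]
    (p : Ω → ℝ)
    (X : Ω → 𝒳) (Y : Ω → 𝒴) (D : Ω → Fin 2)
    (cpr : (Ω → Prop) → 𝒴 → ℝ)
    (hcpr : ∀ (A : Ω → Prop) (y : 𝒴), cpr A y =
      (∑ ω ∈ univ.filter (fun ω => Y ω = y ∧ A ω), p ω) /
        (∑ ω ∈ univ.filter A, p ω))
    (M : 𝒳 → Set 𝒳)
    (hM : ∀ x, M x = {x' | ∀ y, cpr (fun ω => X ω = x') y = cpr (fun ω => X ω = x) y})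
    (hpos : ∀ (d : Fin 2) (x : 𝒳), 0 < ∑ ω ∈ univ.filter (fun ω => D ω = d ∧ X ω = x), p ω)
    (hYD_X : ∀ (y : 𝒴) (d : Fin 2) (x : 𝒳),
      cpr (fun ω => D ω = d ∧ X ω = x) y = cpr (fun ω => X ω = x) y) :
    (∀ (y : 𝒴) (x : 𝒳), cpr (fun ω => X ω = x) y = cpr (fun ω => X ω ∈ M x) y) ∧
    (∀ (y : 𝒴) (d : Fin 2) (x : 𝒳),
      cpr (fun ω => D ω = d ∧ X ω ∈ M x) y = cpr (fun ω => X ω ∈ M x) y) := by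
  obtain rfl : cpr = condProb p Y := funext₂ hcpr
  have hmass_pos (x : 𝒳) : 0 < mass p (fun ω => X ω = x) := by
    rw [mass_eq_sum_mass_and_eq p _ D fun ω _ => mem_univ (D ω)]
    refine sum_pos (fun d _ => ?_) univ_nonempty
    rw [mass_congr p fun ω => and_comm]
    exact hpos d x
  have hclass {x x' : 𝒳} (h : x' ∈ M x) (y : 𝒴) :
      condProb p Y (fun ω => X ω = x') y = condProb p Y (fun ω => X ω = x) y := by
    rw [hM] at h
    exact h y
  have hM_nonempty (x : 𝒳) : (M x).Nonempty := ⟨x, by rw [hM]; exact fun _ => rfl⟩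
  have hXM (y : 𝒴) (x : 𝒳) :
      condProb p Y (fun ω => X ω = x) y = condProb p Y (fun ω => X ω ∈ M x) y := by
    simpa using (condProb_and_mem_eq_of_forall_mem p Y (fun _ => True) X (M x)
      (fun x' hx' => by simpa using hclass hx' y) (fun x' _ => by simpa using hmass_pos x')
      (hM_nonempty x)).symm
  refine ⟨hXM, fun y d x => ?_⟩
  rw [← hXM]
  exact condProb_and_mem_eq_of_forall_mem p Y (D · = d) X (M x)
    (fun x' hx' => (hYD_X y d x').trans (hclass hx' y)) (fun x' _ => hpos d x') (hM_nonempty x)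

/-- Coarsening the covariate to its observational partition preserves
conditional independence.  If `Y ⊥ D ∣ X`, and `M` maps each covariate value to its
observational equivalence class (values with identical conditional outcome
distributions), then `Y ⊥ X ∣ M` and `Y ⊥ D ∣ M`. -/
theorem observational_partition_preserves_unconfoundedness
    {Ω 𝒳 𝒴 : Type*} [Fintype Ω] [Fintype 𝒳] [Fintype 𝒴]
    (p : Ω → ℝ) (hp : ∀ ω, 0 ≤ p ω) (hp1 : ∑ ω, p ω = 1)
    (X : Ω → 𝒳) (Y : Ω → 𝒴) (D : Ω → Fin 2)
    (cpr : (Ω → Prop) → 𝒴 → ℝ)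
    (hcpr : ∀ (A : Ω → Prop) (y : 𝒴), cpr A y =
      (∑ ω ∈ univ.filter (fun ω => Y ω = y ∧ A ω), p ω) /
        (∑ ω ∈ univ.filter A, p ω))
    (M : 𝒳 → Set 𝒳)
    (hM : ∀ x, M x = {x' | ∀ y, cpr (fun ω => X ω = x') y = cpr (fun ω => X ω = x) y})
    (hpos : ∀ (d : Fin 2) (x : 𝒳), 0 < ∑ ω ∈ univ.filter (fun ω => D ω = d ∧ X ω = x), p ω)
    (hYD_X : ∀ (y : 𝒴) (d : Fin 2) (x : 𝒳),
      cpr (fun ω => D ω = d ∧ X ω = x) y = cpr (fun ω => X ω = x) y) :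
    (∀ (y : 𝒴) (x : 𝒳), cpr (fun ω => X ω = x) y = cpr (fun ω => X ω ∈ M x) y) ∧
    (∀ (y : 𝒴) (d : Fin 2) (x : 𝒳),
      cpr (fun ω => D ω = d ∧ X ω ∈ M x) y = cpr (fun ω => X ω ∈ M x) y) :=
  observational_partition_preserves_unconfoundedness_general p X Y D cpr hcpr M hM hpos hYD_X
end

section
/- Let Y ⊥ X | M and Y ⊥ D | X hold for random variables on a finite probability space, where M = f(X) is a function of X. Then P(Y=y | D=d, M=m) = P(Y=y | M=m) for all y, d, m with positive-probability conditioning events, i.e., Y ⊥ D | M. -/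
open Finset
open scoped Classical BigOperators

/-! Split `{D = d, M = m}` along the values `x` of `X`. A non-null cell `{D = d, X = x}` forces
`f x = m`, and on it `Y ⊥ D | X` and `Y ⊥ X | M` give `P(Y = y | D = d, X = x) = P(Y = y | M = m)`;
null cells contribute nothing because `p ≥ 0`. Summing over `x` yields
`P(Y = y, D = d, M = m) = P(Y = y | M = m) · P(D = d, M = m)`. -/

section WeightedSums

variable {Ω : Type*} [Fintype Ω] {p : Ω → ℝ}

theorem sum_filter_le_sum_filter_of_imp (hp : ∀ ω, 0 ≤ p ω) {A B : Ω → Prop}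
    [DecidablePred A] [DecidablePred B] (hBA : ∀ ω, B ω → A ω) :
    ∑ ω ∈ univ.filter B, p ω ≤ ∑ ω ∈ univ.filter A, p ω :=
  sum_le_sum_of_subset_of_nonneg (monotone_filter_right _ fun ω _ => hBA ω)
    fun ω _ _ => hp ω

theorem sum_filter_and_eq_zero_of_sum_filter_nonpos (hp : ∀ ω, 0 ≤ p ω) (A B : Ω → Prop)
    [DecidablePred A] [DecidablePred B] (hA : ∑ ω ∈ univ.filter A, p ω ≤ 0) :
    ∑ ω ∈ univ.filter (fun ω => B ω ∧ A ω), p ω = 0 :=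
  le_antisymm ((sum_filter_le_sum_filter_of_imp hp fun _ h => h.2).trans hA)
    (sum_nonneg fun ω _ => hp ω)

theorem sum_filter_and_eq_mul_of_forall_fiber {𝒳 : Type*} [Fintype 𝒳] [DecidableEq 𝒳]
    (hp : ∀ ω, 0 ≤ p ω) (A B : Ω → Prop) [DecidablePred A] [DecidablePred B]
    (X : Ω → 𝒳) (c : ℝ)
    (hcell : ∀ x, 0 < ∑ ω ∈ univ.filter (fun ω => A ω ∧ X ω = x), p ω →
      ∑ ω ∈ univ.filter (fun ω => B ω ∧ A ω ∧ X ω = x), p ω =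
        c * ∑ ω ∈ univ.filter (fun ω => A ω ∧ X ω = x), p ω) :
    ∑ ω ∈ univ.filter (fun ω => B ω ∧ A ω), p ω = c * ∑ ω ∈ univ.filter A, p ω := by
  have hfib : ∀ (E : Ω → Prop) [DecidablePred E], ∑ ω ∈ univ.filter E, p ω =
      ∑ x, ∑ ω ∈ univ.filter (fun ω => E ω ∧ X ω = x), p ω := fun E _ => by
    rw [← sum_fiberwise (univ.filter E) X p]
    exact sum_congr rfl fun x _ => by rw [filter_filter]
  rw [hfib A, hfib, mul_sum]
  refine sum_congr rfl fun x _ => ?_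
  rcases (sum_nonneg fun ω _ => hp ω : 0 ≤ ∑ ω ∈ univ.filter (fun ω => A ω ∧ X ω = x), p ω)
    |>.lt_or_eq with hpos | hnull
  · simpa only [and_assoc] using hcell x hpos
  · have := sum_filter_and_eq_zero_of_sum_filter_nonpos hp _ B hnull.ge
    rw [← hnull, mul_zero]
    simpa only [and_assoc] using this

end WeightedSums

theorem coarsened_conditional_independence_general
    {Ω 𝒳 𝒴 ℳ : Type*} [Fintype Ω] [Fintype 𝒳]
    (p : Ω → ℝ) (hp : ∀ ω, 0 ≤ p ω)
    (X : Ω → 𝒳) (Y : Ω → 𝒴) (D : Ω → Fin 2) (f : 𝒳 → ℳ)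
    (cpr : (Ω → Prop) → 𝒴 → ℝ)
    (hcpr : ∀ (A : Ω → Prop) (y : 𝒴), cpr A y =
      (∑ ω ∈ univ.filter (fun ω => Y ω = y ∧ A ω), p ω) /
        (∑ ω ∈ univ.filter A, p ω))
    (hYX_M : ∀ (y : 𝒴) (x : 𝒳),
      (0 < ∑ ω ∈ univ.filter (fun ω => X ω = x), p ω) →
      cpr (fun ω => X ω = x) y = cpr (fun ω => f (X ω) = f x) y)
    (hYD_X : ∀ (y : 𝒴) (d : Fin 2) (x : 𝒳),
      (0 < ∑ ω ∈ univ.filter (fun ω => D ω = d ∧ X ω = x), p ω) →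
      cpr (fun ω => D ω = d ∧ X ω = x) y = cpr (fun ω => X ω = x) y) :
    ∀ (y : 𝒴) (d : Fin 2) (m : ℳ),
      (0 < ∑ ω ∈ univ.filter (fun ω => D ω = d ∧ f (X ω) = m), p ω) →
      cpr (fun ω => D ω = d ∧ f (X ω) = m) y = cpr (fun ω => f (X ω) = m) y := by
  -- `hcpr` filters with the classical instance, the goal with the inferred ones.
  have hcpr' : ∀ (A : Ω → Prop) [DecidablePred A] (y : 𝒴), cpr A y =
      (∑ ω ∈ univ.filter (fun ω => Y ω = y ∧ A ω), p ω) / ∑ ω ∈ univ.filter A, p ω := by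
    intro A _ y
    rw [hcpr]
    congr
  intro y d m hpos
  rw [hcpr', div_eq_iff hpos.ne']
  refine sum_filter_and_eq_mul_of_forall_fiber hp _ _ X _ fun x hx => ?_
  obtain rfl : f x = m := by
    obtain ⟨ω, hω, -⟩ := exists_ne_zero_of_sum_ne_zero hx.ne'
    obtain ⟨-, ⟨-, hm⟩, rfl⟩ := mem_filter.1 hω
    exact hm
  have hcell : ∀ ω, ((D ω = d ∧ f (X ω) = f x) ∧ X ω = x) ↔ (D ω = d ∧ X ω = x) :=
    fun ω => ⟨fun h => ⟨h.1.1, h.2⟩, fun h => ⟨⟨h.1, h.2 ▸ rfl⟩, h.2⟩⟩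
  simp only [hcell] at hx ⊢
  have hXx : 0 < ∑ ω ∈ univ.filter (fun ω => X ω = x), p ω :=
    hx.trans_le (sum_filter_le_sum_filter_of_imp hp fun _ h => h.2)
  rw [← (hYD_X y d x hx).trans (hYX_M y x hXx), hcpr', div_mul_cancel₀ _ hx.ne']

/-- Law-of-total-probability step.  If `M = f ∘ X` is a function of `X`,
`Y ⊥ X ∣ M` and `Y ⊥ D ∣ X`, then `Y ⊥ D ∣ M`: for all `y`, `d`, `m` with
positive-probability conditioning events, `P(Y=y ∣ D=d, M=m) = P(Y=y ∣ M=m)`. -/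
theorem coarsened_conditional_independence
    {Ω 𝒳 𝒴 ℳ : Type*} [Fintype Ω] [Fintype 𝒳] [Fintype 𝒴] [Fintype ℳ]
    (p : Ω → ℝ) (hp : ∀ ω, 0 ≤ p ω) (hp1 : ∑ ω, p ω = 1)
    (X : Ω → 𝒳) (Y : Ω → 𝒴) (D : Ω → Fin 2) (f : 𝒳 → ℳ)
    (cpr : (Ω → Prop) → 𝒴 → ℝ)
    (hcpr : ∀ (A : Ω → Prop) (y : 𝒴), cpr A y =
      (∑ ω ∈ univ.filter (fun ω => Y ω = y ∧ A ω), p ω) /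
        (∑ ω ∈ univ.filter A, p ω))
    (hYX_M : ∀ (y : 𝒴) (x : 𝒳),
      (0 < ∑ ω ∈ univ.filter (fun ω => X ω = x), p ω) →
      cpr (fun ω => X ω = x) y = cpr (fun ω => f (X ω) = f x) y)
    (hYD_X : ∀ (y : 𝒴) (d : Fin 2) (x : 𝒳),
      (0 < ∑ ω ∈ univ.filter (fun ω => D ω = d ∧ X ω = x), p ω) →
      cpr (fun ω => D ω = d ∧ X ω = x) y = cpr (fun ω => X ω = x) y) :
    ∀ (y : 𝒴) (d : Fin 2) (m : ℳ),
      (0 < ∑ ω ∈ univ.filter (fun ω => D ω = d ∧ f (X ω) = m), p ω) →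
      cpr (fun ω => D ω = d ∧ f (X ω) = m) y = cpr (fun ω => f (X ω) = m) y :=
  coarsened_conditional_independence_general p hp X Y D f cpr hcpr hYX_M hYD_X
end
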